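/- arXiv:2405.10720 — 2 statements merged into one kernel-verified Lean document; each statement's English description precedes it below -/
import Mathlib

section
/- Let K be a commutative ring with derivation \partial satisfying \partial x = 1 for a fixed element x \in K, and let A, B \in K[v] be polynomials in v with coefficients in K. Then for every r \ge 0, \sum_{j\ge 0} (-1)^j \partial^j ( [v^j]( A \cdot \partial^r B ) ) = \sum_{j\ge 0} (-1)^j \partial^j ( [v^j]( B \cdot (-(\partial + v))^r A ) ), where \partial acts coefficientwise on polynomials in v and (\partial + v) denotes the operator sending a polynomial P(v) to \partial P(v) + v P(v). -/
/-!
Write `c_j = [v^j](P Q)`. By Leibniz, `[v^j](P · ∂Q) = [v^j](-(∂ + v)P · Q) + ∂ c_j + c_{j-1}`,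
and `(-1)^j ∂^j (∂ c_j + c_{j-1})` is a telescoping term. Hence moving one `∂` from `Q` onto `P`,
where it becomes `-(∂ + v)`, leaves the alternating sum unchanged as soon as the range of
summation exceeds the degree of `P Q`; iterating `r` times gives the identity.
-/

open Finset

namespace ExchangeLemma

variable {K : Type*} [CommRing K]

/-- `[v^j](P Q)` for polynomials `P, Q ∈ K[v]` given by their coefficient sequences. -/
def conv (P Q : ℕ → K) (j : ℕ) : K := ∑ k ∈ range (j + 1), P k * Q (j - k)

def mulV (P : ℕ → K) (j : ℕ) : K := if j = 0 then 0 else P (j - 1)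

def altSum (D : K → K) (N : ℕ) (c : ℕ → K) : K := ∑ j ∈ range N, (-1) ^ j * D^[j] (c j)

def negDerivAddV (D : K → K) (P : ℕ → K) (m : ℕ) : K := -(D (P m) + mulV P m)

lemma conv_comm (P Q : ℕ → K) : conv P Q = conv Q P := by
  funext j
  unfold conv
  rw [← sum_range_reflect]
  refine sum_congr rfl fun k hk => ?_
  rw [mem_range] at hk
  rw [mul_comm, show j - (j + 1 - 1 - k) = k by omega, show j + 1 - 1 - k = j - k by omega]

lemma conv_mulV (P Q : ℕ → K) : conv (mulV P) Q = mulV (conv P Q) := by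
  funext j
  cases j with
  | zero => simp [conv, mulV]
  | succ j => simp [conv, mulV, sum_range_succ' _ (j + 1)]

lemma conv_eq_zero_of_le {P Q : ℕ → K} {NP NQ j : ℕ} (hP : ∀ k, NP ≤ k → P k = 0)
    (hQ : ∀ k, NQ ≤ k → Q k = 0) (h : NP + NQ ≤ j + 1) : conv P Q j = 0 := by
  refine sum_eq_zero fun k hk => ?_
  rw [mem_range] at hk
  by_cases hk' : NP ≤ k
  · rw [hP k hk', zero_mul]
  · rw [hQ (j - k) (by omega), mul_zero]

lemma mulV_conv_eq_zero_of_le {P Q : ℕ → K} {NP NQ N : ℕ} (hP : ∀ k, NP ≤ k → P k = 0)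
    (hQ : ∀ k, NQ ≤ k → Q k = 0) (h : NP + NQ ≤ N) : mulV (conv P Q) N = 0 := by
  cases N with
  | zero => rfl
  | succ N => exact conv_eq_zero_of_le hP hQ h

section Derivation

variable {R : Type*} [CommSemiring R] [Algebra R K] (d : Derivation R K K)

lemma negDerivAddV_eq_zero_of_le {P : ℕ → K} {NP : ℕ} (hP : ∀ k, NP ≤ k → P k = 0) (k : ℕ)
    (hk : NP + 1 ≤ k) : negDerivAddV d P k = 0 := by
  simp [negDerivAddV, mulV, hP k (by omega), hP (k - 1) (by omega), show k ≠ 0 by omega]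

lemma derivation_conv (P Q : ℕ → K) (j : ℕ) :
    d (conv P Q j) = conv P (d ∘ Q) j + conv (d ∘ P) Q j := by
  simp only [conv, map_sum, ← sum_add_distrib]
  exact sum_congr rfl fun k _ => by
    rw [Derivation.leibniz, smul_eq_mul, smul_eq_mul, Function.comp_apply, Function.comp_apply]
    ring

lemma conv_negDerivAddV (P Q : ℕ → K) (j : ℕ) :
    conv (negDerivAddV d P) Q j = -(conv (d ∘ P) Q j + mulV (conv P Q) j) := by
  rw [← conv_mulV, conv, conv, conv, ← sum_add_distrib, ← sum_neg_distrib]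
  exact sum_congr rfl fun k _ => by rw [negDerivAddV, Function.comp_apply]; ring

lemma conv_comp_derivation (P Q : ℕ → K) (j : ℕ) :
    conv P (d ∘ Q) j
      = conv (negDerivAddV d P) Q j + (d (conv P Q j) + mulV (conv P Q) j) := by
  rw [conv_negDerivAddV, derivation_conv]
  ring

lemma altSum_add (N : ℕ) (c c' : ℕ → K) :
    altSum d N (fun j => c j + c' j) = altSum d N c + altSum d N c' := by
  simp only [altSum, iterate_map_add, mul_add, sum_add_distrib]

lemma altSum_derivation_add_mulV {N : ℕ} {c : ℕ → K} (hc : mulV c N = 0) :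
    altSum d N (fun j => d (c j) + mulV c j) = 0 := by
  let f : ℕ → K := fun j => -((-1) ^ j * d^[j] (mulV c j))
  have hstep : ∀ j, (-1) ^ j * d^[j] (d (c j) + mulV c j) = f (j + 1) - f j := fun j => by
    simp only [f, mulV, iterate_map_add, Function.iterate_succ_apply, Nat.add_sub_cancel,
      if_neg j.succ_ne_zero]
    ring
  have hf0 : f 0 = 0 := by simp [f, mulV]
  have hfN : f N = 0 := by simp [f, hc]
  rw [altSum, sum_congr rfl fun j _ => hstep j, sum_range_sub, hfN, hf0, sub_zero]

lemma altSum_conv_comp_derivation {P Q : ℕ → K} {NP NQ N : ℕ} (hP : ∀ k, NP ≤ k → P k = 0)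
    (hQ : ∀ k, NQ ≤ k → Q k = 0) (hN : NP + NQ ≤ N) :
    altSum d N (conv P (d ∘ Q)) = altSum d N (conv (negDerivAddV d P) Q) := by
  rw [funext (conv_comp_derivation d P Q), altSum_add,
    altSum_derivation_add_mulV d (mulV_conv_eq_zero_of_le hP hQ hN), add_zero]

lemma altSum_conv_comp_iterate_derivation {Q : ℕ → K} {NQ : ℕ} (hQ : ∀ k, NQ ≤ k → Q k = 0)
    (r : ℕ) {P : ℕ → K} {NP N : ℕ} (hP : ∀ k, NP ≤ k → P k = 0) (hN : NP + NQ + r ≤ N) :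
    altSum d N (conv P (d^[r] ∘ Q)) = altSum d N (conv ((negDerivAddV d)^[r] P) Q) := by
  induction r generalizing P NP with
  | zero => rfl
  | succ r ih =>
    have hQr : ∀ k, NQ ≤ k → (d^[r] ∘ Q) k = 0 := fun k hk => by
      rw [Function.comp_apply, hQ k hk, iterate_map_zero]
    rw [Function.iterate_succ', Function.comp_assoc,
      altSum_conv_comp_derivation d hP hQr (by omega),
      ih (negDerivAddV_eq_zero_of_le d hP) (by omega), Function.iterate_succ_apply]

end Derivation

end ExchangeLemma

open ExchangeLemma in
theorem exchange_lemma_pow_general {K : Type*} [CommRing K] (D : K → K)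
    (hadd : ∀ a b : K, D (a + b) = D a + D b)
    (hleib : ∀ a b : K, D (a * b) = a * D b + b * D a)
    (A B : ℕ → K) (NA NB : ℕ)
    (hA : ∀ k, NA ≤ k → A k = 0) (hB : ∀ k, NB ≤ k → B k = 0)
    (E : (ℕ → K) → (ℕ → K))
    (hE : ∀ (P : ℕ → K) (m : ℕ),
      E P m = -(D (P m) + (if m = 0 then 0 else P (m - 1))))
    (r : ℕ) :
    ∑ j ∈ Finset.range (NA + NB + r + 2),
      (-1 : K) ^ j * D^[j] (∑ k ∈ Finset.range (j + 1), A k * D^[r] (B (j - k)))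
    = ∑ j ∈ Finset.range (NA + NB + r + 2),
      (-1 : K) ^ j * D^[j] (∑ k ∈ Finset.range (j + 1), B k * (E^[r] A) (j - k)) := by
  let d : Derivation ℤ K K := Derivation.mk' (AddMonoidHom.mk' D hadd).toIntLinearMap hleib
  have hEd : E = negDerivAddV d := funext₂ hE
  change altSum d _ (conv A (d^[r] ∘ B)) = altSum d _ (conv B (E^[r] A))
  rw [conv_comm B, hEd]
  exact altSum_conv_comp_iterate_derivation d hB r hA (by omega)

/-- Key exchange lemma (Equation id-xy-sympl2 of the paper, with `∂x = 1`):
for every `r ≥ 0`,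
`∑_j (-1)^j ∂^j [v^j](A ∂^r B) = ∑_j (-1)^j ∂^j [v^j](B (-(∂+v))^r A)`,
where `A, B` are polynomials in `v` with coefficients in `K` (encoded by
coefficient sequences vanishing beyond `NA`, `NB`), `∂` acts coefficientwise,
and `(∂ + v)` sends `P(v)` to `∂P(v) + v P(v)`. -/
theorem exchange_lemma_pow {K : Type*} [CommRing K] (D : K → K)
    (hadd : ∀ a b : K, D (a + b) = D a + D b)
    (hleib : ∀ a b : K, D (a * b) = a * D b + b * D a)
    (x : K) (hx : D x = 1)
    (A B : ℕ → K) (NA NB : ℕ)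
    (hA : ∀ k, NA ≤ k → A k = 0) (hB : ∀ k, NB ≤ k → B k = 0)
    (E : (ℕ → K) → (ℕ → K))
    (hE : ∀ (P : ℕ → K) (m : ℕ),
      E P m = -(D (P m) + (if m = 0 then 0 else P (m - 1))))
    (r : ℕ) :
    ∑ j ∈ Finset.range (NA + NB + r + 2),
      (-1 : K) ^ j * D^[j] (∑ k ∈ Finset.range (j + 1), A k * D^[r] (B (j - k)))
    = ∑ j ∈ Finset.range (NA + NB + r + 2),
      (-1 : K) ^ j * D^[j] (∑ k ∈ Finset.range (j + 1), B k * (E^[r] A) (j - k)) :=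
  exchange_lemma_pow_general D hadd hleib A B NA NB hA hB E hE r
end

section
/- Let F be a field and a_1, ..., a_n, b_1, ..., b_n \in F with a_i \ne b_j for all i, j. Then \sum_{\sigma \in S_n} sgn(\sigma) \prod_{i=1}^n \frac{1}{a_i - b_{\sigma(i)}} = \frac{\prod_{1 \le i < j \le n} (a_j - a_i)(b_i - b_j)}{\prod_{i,j=1}^n (a_i - b_j)}. -/
/-!
Induct on `n`. Scaling row `i` of the Cauchy matrix by `a i - b 0` makes its first column all
ones; subtracting the first row from the others and expanding along the first column leaves the
matrix with entries `(a (i+1) - a 0) (b 0 - b (j+1)) / ((a 0 - b (j+1)) (a (i+1) - b (j+1)))`,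
i.e. the Cauchy matrix of the remaining points with rescaled rows and columns. The right-hand side
changes by exactly the same factors when the points `a 0`, `b 0` are split off.
-/

open Finset Matrix

theorem Matrix.det_eq_of_col_zero_eq_one {R : Type*} [CommRing R] {n : ℕ}
    (M : Matrix (Fin (n + 1)) (Fin (n + 1)) R) (hM : ∀ i, M i 0 = 1) :
    M.det = (of fun i j : Fin n => M i.succ j.succ - M 0 j.succ).det := by
  set N : Matrix (Fin (n + 1)) (Fin (n + 1)) R :=
    of fun i j => if i = 0 then M 0 j else M i j - M 0 j
  have hMN : M.det = N.det :=
    det_eq_of_forall_row_eq_smul_add_const (fun i => if i = 0 then 0 else 1) 0 (by simp)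
      fun i j => by by_cases hi : i = 0 <;> simp [N, hi]
  rw [hMN, det_succ_column_zero, Fin.sum_univ_succ]
  simp [N, hM, Fin.succ_ne_zero, submatrix]

theorem prod_filter_fst_lt_snd_fin_succ {M : Type*} [CommMonoid M] {n : ℕ}
    (f : Fin (n + 1) → Fin (n + 1) → M) :
    ∏ p ∈ univ.filter (fun p : Fin (n + 1) × Fin (n + 1) => p.1 < p.2), f p.1 p.2
      = (∏ j : Fin n, f 0 j.succ) *
        ∏ p ∈ univ.filter (fun p : Fin n × Fin n => p.1 < p.2), f p.1.succ p.2.succ := by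
  simp only [prod_filter, ← univ_product_univ, prod_product]
  rw [Fin.prod_univ_succ]
  congr 1
  · simp [Fin.prod_univ_succ]
  · simp [Fin.prod_univ_succ, Fin.succ_lt_succ_iff]

theorem Fin.prod_prod_univ_succ {M : Type*} [CommMonoid M] {n : ℕ}
    (f : Fin (n + 1) → Fin (n + 1) → M) :
    ∏ i, ∏ j, f i j =
      (∏ i, f i 0) * ((∏ j : Fin n, f 0 j.succ) * ∏ i : Fin n, ∏ j : Fin n, f i.succ j.succ) := by
  simp only [Fin.prod_univ_succ (f := f _), prod_mul_distrib]
  rw [Fin.prod_univ_succ (fun i => ∏ j : Fin n, f i j.succ)]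

section Cauchy

variable {F : Type*} [Field F]

def cauchyMatrix {ι : Type*} (a b : ι → F) : Matrix ι ι F :=
  of fun i j => (a i - b j)⁻¹

theorem det_cauchyMatrix_eq_sum {ι : Type*} [Fintype ι] [DecidableEq ι] (a b : ι → F) :
    (cauchyMatrix a b).det =
      ∑ σ : Equiv.Perm ι, ((σ.sign : ℤ) : F) * ∏ i, (a i - b (σ i))⁻¹ := by
  rw [← det_transpose, det_apply']
  rfl

theorem det_cauchyMatrix_succ {n : ℕ} (a b : Fin (n + 1) → F) (hab : ∀ i j, a i ≠ b j) :
    (cauchyMatrix a b).det = (∏ i, (a i - b 0))⁻¹ * ((∏ i : Fin n, (a i.succ - a 0)) *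
      ((∏ j : Fin n, (b 0 - b j.succ) / (a 0 - b j.succ)) *
        (cauchyMatrix (Fin.tail a) (Fin.tail b)).det)) := by
  have hne : ∀ i j, a i - b j ≠ 0 := fun i j => sub_ne_zero.mpr (hab i j)
  set N : Matrix (Fin (n + 1)) (Fin (n + 1)) F := of fun i j => (a i - b 0) * (a i - b j)⁻¹
  have hC : cauchyMatrix a b = of fun i j => (a i - b 0)⁻¹ * N i j := by
    ext i j
    simp [N, cauchyMatrix, inv_mul_cancel_left₀ (hne i 0)]
  have hN : (of fun i j : Fin n => N i.succ j.succ - N 0 j.succ).det =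
      (∏ i : Fin n, (a i.succ - a 0)) * ((∏ j : Fin n, (b 0 - b j.succ) / (a 0 - b j.succ)) *
        (cauchyMatrix (Fin.tail a) (Fin.tail b)).det) := by
    rw [← det_mul_row, ← det_mul_column]
    congr 1
    ext i j
    have h₁ := hne i.succ j.succ
    have h₂ := hne 0 j.succ
    simp only [N, cauchyMatrix, of_apply, Fin.tail]
    field_simp
    ring
  rw [hC, det_mul_column, prod_inv_distrib,
    det_eq_of_col_zero_eq_one N fun i => mul_inv_cancel₀ (hne i 0), hN]

theorem det_cauchyMatrix {n : ℕ} (a b : Fin n → F) (hab : ∀ i j, a i ≠ b j) :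
    (cauchyMatrix a b).det =
      (∏ p ∈ univ.filter (fun p : Fin n × Fin n => p.1 < p.2),
          (a p.2 - a p.1) * (b p.1 - b p.2)) / ∏ i, ∏ j, (a i - b j) := by
  induction n with
  | zero => simp
  | succ n ih =>
    rw [det_cauchyMatrix_succ a b hab, ih (Fin.tail a) (Fin.tail b) fun i j => hab _ _,
      prod_filter_fst_lt_snd_fin_succ fun i j => (a j - a i) * (b i - b j),
      Fin.prod_prod_univ_succ fun i j => a i - b j, prod_div_distrib,
      prod_mul_distrib (s := univ) (f := fun j : Fin n => a j.succ - a 0)]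
    simp only [Fin.tail]
    ring

end Cauchy

/-- Cauchy determinant formula: for `a_i ≠ b_j`,
`∑_{σ ∈ S_n} sgn(σ) ∏_i 1/(a_i - b_{σ i})
  = ∏_{i<j} (a_j - a_i)(b_i - b_j) / ∏_{i,j} (a_i - b_j)`. -/
theorem cauchy_determinant {F : Type*} [Field F] (n : ℕ) (a b : Fin n → F)
    (hab : ∀ i j, a i ≠ b j) :
    ∑ σ : Equiv.Perm (Fin n),
      ((Equiv.Perm.sign σ : ℤ) : F) * ∏ i, (a i - b (σ i))⁻¹
    = (∏ p ∈ Finset.univ.filter (fun p : Fin n × Fin n => p.1 < p.2),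
        (a p.2 - a p.1) * (b p.1 - b p.2))
      / ∏ i, ∏ j, (a i - b j) := by
  rw [← det_cauchyMatrix_eq_sum, det_cauchyMatrix a b hab]
end
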